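/- arXiv:math/0409166 — 3 statements merged into one kernel-verified Lean document; each statement's English description precedes it below -/
import Mathlib

section
/- Let (C, d) be a finite-dimensional Z₂-graded cochain complex over ℝ equipped with an inner product for which C^even and C^odd are orthogonal. Let d^♯ denote the adjoint of d. Then the canonical isomorphism det C ≅ det HC maps the norm ||·||_{det C} induced by the inner product on C to T_C · ||·||_{det HC}, where ||·||_{det HC} is the norm induced by the inner product on HC obtained by restriction to harmonic elements (i.e. via the orthogonal identification HC ≅ Z ∩ B^⊥), and T_C := Vol(d̄: C^even → C^odd) / Vol(d̄: C^odd → C^even). -/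
/-!
STATEMENT 2: For a finite-dimensional Z₂-graded cochain complex `(C, d)` over ℝ with inner
product (even and odd parts orthogonal), the canonical isomorphism `det C ≅ det HC` maps the
induced norm `||·||_{det C}` to `T_C · ||·||_{det HC}`, where `HC` is identified with the
harmonic subspaces `H = ker d ∩ (im d)^⊥` and
`T_C = Vol(d̄ : C^even → C^odd) / Vol(d̄ : C^odd → C^even)`.

Concretely (and equivalently), this says: for any orthonormal bases `β` of `B = im d`,
`η` of the harmonic space `H`, in each parity, and any lifts `u` with `d u = β` (of the
opposite parity), the generators `ω_{C^even} = β^even ∧ η^even ∧ u^even` and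
`ω_{C^odd} = β^odd ∧ η^odd ∧ u^odd` of the top exterior powers satisfy
`‖ω_{C^odd}‖ = T_C · ‖ω_{C^even}‖`, where the norm of a wedge `v₁ ∧ ⋯ ∧ vₙ` (top degree) is
`|det_b(v)|` for an orthonormal basis `b`.  (This is exactly the statement that the canonical
isomorphism `det C ≅ det HC`, which sends `ω_{C^even} ⊗ (ω_{C^odd})^{-1}` to
`ω_{H^even} ⊗ (ω_{H^odd})^{-1}` up to sign, rescales the norm by `T_C`.)
-/

open Module
open scoped Classical

variable {V : Type*} [NormedAddCommGroup V] [InnerProductSpace ℝ V] [FiniteDimensional ℝ V]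
variable {W : Type*} [NormedAddCommGroup W] [InnerProductSpace ℝ W] [FiniteDimensional ℝ W]

/-- `det'`: the determinant of the restriction of `T` to the orthogonal complement of its
kernel (the product of the nonzero eigenvalues, for self-adjoint `T`). -/
noncomputable def detPrime (T : V →ₗ[ℝ] V) : ℝ :=
  if h : ∀ x ∈ (LinearMap.ker T)ᗮ, T x ∈ (LinearMap.ker T)ᗮ
  then LinearMap.det (T.restrict h) else 1

/-- `Vol(ᾱ) = √(det'(α^♯ α))`. -/
noncomputable def volBar (α : V →ₗ[ℝ] W) : ℝ :=
  Real.sqrt (detPrime ((LinearMap.adjoint α).comp α))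

/-- The norm, in the determinant line `Λ^top V` with the inner product induced norm, of the
wedge `v 0 ∧ ⋯ ∧ v (n-1)` of a family `v` of `n = dim V` vectors: `|det_b v|` for an
orthonormal basis `b` of `V`. -/
noncomputable def wedgeNorm (v : Fin (finrank ℝ V) → V) : ℝ :=
  |(stdOrthonormalBasis ℝ V).toBasis.det v|

/-!
In each parity, let `κ` be an orthonormal basis of `ker d`, `γ` one of `im d`, `u` a lift of `γ`,
and `e` an orthonormal basis of `(ker d)ᗮ`. In the orthonormal basis `κ ++ e` the family `κ ++ u`
is block upper triangular with diagonal blocks `1` and `Q = (⟪e i, u j⟫)`, so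
`‖κ ∧ u‖ = |det Q|`. The matrix of `d̄ : (ker d)ᗮ → im d` is `A = (⟪γ i, d (e j)⟫)`, and
`d^♯ d` restricted to `(ker d)ᗮ` has matrix `Aᵀ A`, so `Vol(d̄) = |det A|`. Since `d u = γ`,
`A Q = 1`; hence `Vol(d̄) · ‖κ ∧ u‖ = 1` in each parity, and dividing the two identities gives `T_C`.
-/

open scoped RealInnerProductSpace

section InnerProductSpace

variable {E : Type*} [NormedAddCommGroup E] [InnerProductSpace ℝ E]

theorem Orthonormal.append {m k : ℕ} {f : Fin m → E} {g : Fin k → E} (hf : Orthonormal ℝ f)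
    (hg : Orthonormal ℝ g) (hfg : ∀ i j, ⟪f i, g j⟫ = 0) : Orthonormal ℝ (Fin.append f g) := by
  rw [orthonormal_iff_ite] at hf hg ⊢
  intro a b
  induction a using Fin.addCases with
  | left i =>
    induction b using Fin.addCases with
    | left j => simpa using hf i j
    | right j => simp [hfg, Fin.ext_iff]; omega
  | right i =>
    induction b using Fin.addCases with
    | left j => simp [real_inner_comm, hfg, Fin.ext_iff]; omega
    | right j => simpa using hg i j

theorem Orthonormal.inner_eq_sum_of_mem_span {ι : Type*} [Fintype ι] {v : ι → E}
    (hv : Orthonormal ℝ v) {y : E} (hy : y ∈ Submodule.span ℝ (Set.range v)) (x : E) :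
    ⟪x, y⟫ = ∑ i, ⟪x, v i⟫ * ⟪v i, y⟫ := by
  obtain ⟨c, rfl⟩ := (Submodule.mem_span_range_iff_exists_fun ℝ).mp hy
  simp [inner_sum, real_inner_smul_right, hv.inner_right_fintype, mul_comm]

theorem OrthonormalBasis.inner_eq_sum_of_mem {ι : Type*} [Fintype ι] {S : Submodule ℝ E}
    [S.HasOrthogonalProjection] (b : OrthonormalBasis ι ℝ S) {y : E} (hy : y ∈ S) (x : E) :
    ⟪x, y⟫ = ∑ i, ⟪x, b i⟫ * ⟪(b i : E), y⟫ := by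
  simpa using (b.sum_inner_mul_inner (S.orthogonalProjectionOnto x) ⟨y, hy⟩).symm

theorem orthonormal_append_and_mem_of_span_eq {B Z : Submodule ℝ E} (hBZ : B ≤ Z) {m n : ℕ}
    {β : Fin m → E} {η : Fin n → E} (hβ : Orthonormal ℝ β)
    (hβB : Submodule.span ℝ (Set.range β) = B) (hη : Orthonormal ℝ η)
    (hηZ : Submodule.span ℝ (Set.range η) = Z ⊓ Bᗮ) :
    Orthonormal ℝ (Fin.append β η) ∧ ∀ i, Fin.append β η i ∈ Z := by
  have hβ_mem (i : Fin m) : β i ∈ B := hβB ▸ Submodule.subset_span (Set.mem_range_self i)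
  have hη_mem (j : Fin n) : η j ∈ Z ⊓ Bᗮ := hηZ ▸ Submodule.subset_span (Set.mem_range_self j)
  refine ⟨hβ.append hη fun i j => B.inner_right_of_mem_orthogonal (hβ_mem i) (hη_mem j).2,
    fun i => ?_⟩
  induction i using Fin.addCases with
  | left i => simpa using hBZ (hβ_mem i)
  | right j => simpa using (hη_mem j).1

theorem detPrime_eq_det_restrict {T : E →ₗ[ℝ] E} {K : Submodule ℝ E}
    (hK : LinearMap.ker T = K) (hT : ∀ x ∈ Kᗮ, T x ∈ Kᗮ) :
    detPrime T = LinearMap.det (T.restrict hT) := by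
  subst hK
  exact dif_pos hT

end InnerProductSpace

theorem wedgeNorm_eq_abs_det (b : OrthonormalBasis (Fin (finrank ℝ V)) ℝ V)
    (v : Fin (finrank ℝ V) → V) : wedgeNorm v = |b.toBasis.det v| := by
  rw [wedgeNorm, (stdOrthonormalBasis ℝ V).toBasis.det.eq_smul_basis_det b.toBasis,
    AlternatingMap.smul_apply, smul_eq_mul, abs_mul, ← Real.norm_eq_abs (Basis.det _ _),
    OrthonormalBasis.coe_toBasis, OrthonormalBasis.det_to_matrix_orthonormalBasis, one_mul]

theorem wedgeNorm_append_eq_abs_det {m k : ℕ} (κ : Fin m → V) (e u : Fin k → V)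
    (hκe : Orthonormal ℝ (Fin.append κ e)) (h : m + k = finrank ℝ V) :
    wedgeNorm (fun j => Fin.append κ u (Fin.cast h.symm j)) =
      |(Matrix.of fun i j => ⟪e i, u j⟫).det| := by
  set σ : Fin m ⊕ Fin k ≃ Fin (finrank ℝ V) := finSumFinEquiv.trans (finCongr h)
  have hb : Orthonormal ℝ (Fin.append κ e ∘ finSumFinEquiv) :=
    hκe.comp _ finSumFinEquiv.injective
  let b := OrthonormalBasis.mk hb
    (hb.linearIndependent.span_eq_top_of_card_eq_finrank' (by simp [h])).ge
  have hM : b.toBasis.toMatrix ((fun j => Fin.append κ u (Fin.cast h.symm j)) ∘ σ) =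
      Matrix.fromBlocks 1 (Matrix.of fun i j => ⟪κ i, u j⟫) 0
        (Matrix.of fun i j => ⟪e i, u j⟫) := by
    rw [orthonormal_iff_ite] at hb
    ext (i | i) (j | j)
    · simpa [b, σ, Basis.toMatrix_apply, OrthonormalBasis.repr_apply_apply, Matrix.one_apply]
        using hb (.inl i) (.inl j)
    · simp [b, σ, Basis.toMatrix_apply, OrthonormalBasis.repr_apply_apply]
    · simpa [b, σ, Basis.toMatrix_apply, OrthonormalBasis.repr_apply_apply]
        using hb (.inr i) (.inl j)
    · simp [b, σ, Basis.toMatrix_apply, OrthonormalBasis.repr_apply_apply]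
  rw [wedgeNorm_eq_abs_det (b.reindex σ), OrthonormalBasis.reindex_toBasis, Basis.det_reindex,
    Basis.det_apply, hM, Matrix.det_fromBlocks_zero₂₁, Matrix.det_one, one_mul]

theorem adjoint_apply_mem_orthogonal_ker (α : V →ₗ[ℝ] W) (y : W) :
    LinearMap.adjoint α y ∈ (LinearMap.ker α)ᗮ :=
  α.orthogonal_ker ▸ LinearMap.mem_range_self _ y

theorem adjoint_comp_self_mapsTo (α : V →ₗ[ℝ] W) :
    ∀ x ∈ (LinearMap.ker α)ᗮ, (LinearMap.adjoint α ∘ₗ α) x ∈ (LinearMap.ker α)ᗮ :=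
  fun x _ => adjoint_apply_mem_orthogonal_ker α (α x)

theorem volBar_eq_abs_det {ι : Type*} [Fintype ι] [DecidableEq ι] (α : V →ₗ[ℝ] W)
    (e : OrthonormalBasis ι ℝ (LinearMap.ker α)ᗮ) {γ : ι → W} (hγ : Orthonormal ℝ γ)
    (hγα : Submodule.span ℝ (Set.range γ) = LinearMap.range α) :
    volBar α = |(Matrix.of fun i j => ⟪γ i, α (e j)⟫).det| := by
  set A := Matrix.of fun i j => ⟪γ i, α (e j)⟫
  have hgram : LinearMap.toMatrix e.toBasis e.toBasis ((LinearMap.adjoint α ∘ₗ α).restrict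
      (adjoint_comp_self_mapsTo α)) = A.transpose * A := by
    ext i j
    rw [LinearMap.toMatrix_apply, OrthonormalBasis.coe_toBasis_repr_apply,
      OrthonormalBasis.repr_apply_apply, OrthonormalBasis.coe_toBasis, Submodule.coe_inner,
      LinearMap.coe_restrict_apply, LinearMap.comp_apply, LinearMap.adjoint_inner_right,
      hγ.inner_eq_sum_of_mem_span (hγα ▸ LinearMap.mem_range_self α _), Matrix.mul_apply]
    simp [A, real_inner_comm]
  rw [volBar, detPrime_eq_det_restrict α.ker_adjoint_comp_self (adjoint_comp_self_mapsTo α),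
    ← LinearMap.det_toMatrix e.toBasis, hgram,
    Matrix.det_mul, Matrix.det_transpose, ← sq, Real.sqrt_sq_eq_abs]

theorem inner_apply_mul_inner_lift_eq_one {ι : Type*} [Fintype ι] [DecidableEq ι]
    (α : V →ₗ[ℝ] W) (e : OrthonormalBasis ι ℝ (LinearMap.ker α)ᗮ) {γ : ι → W}
    (hγ : Orthonormal ℝ γ) {u : ι → V} (hu : ∀ j, α (u j) = γ j) :
    (Matrix.of fun i j => ⟪γ i, α (e j)⟫) * (Matrix.of fun i j => ⟪(e i : V), u j⟫) = 1 := by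
  ext i j
  calc ∑ l, ⟪γ i, α (e l)⟫ * ⟪(e l : V), u j⟫
      = ∑ l, ⟪u j, e l⟫ * ⟪(e l : V), LinearMap.adjoint α (γ i)⟫ := by
        simp [LinearMap.adjoint_inner_right, real_inner_comm, mul_comm]
    _ = ⟪γ i, γ j⟫ := by
        rw [← e.inner_eq_sum_of_mem (adjoint_apply_mem_orthogonal_ker α (γ i)),
          LinearMap.adjoint_inner_right, hu, real_inner_comm]
    _ = (1 : Matrix ι ι ℝ) i j := by rw [orthonormal_iff_ite.mp hγ, Matrix.one_apply]

theorem volBar_mul_wedgeNorm_append {m k : ℕ} (α : V →ₗ[ℝ] W) {κ : Fin m → V}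
    (hκ : Orthonormal ℝ κ) (hκα : ∀ i, κ i ∈ LinearMap.ker α) {γ : Fin k → W}
    (hγ : Orthonormal ℝ γ) (hγα : Submodule.span ℝ (Set.range γ) = LinearMap.range α)
    {u : Fin k → V} (hu : ∀ j, α (u j) = γ j) (h : m + k = finrank ℝ V) :
    volBar α * wedgeNorm (fun j => Fin.append κ u (Fin.cast h.symm j)) = 1 := by
  have hk : finrank ℝ (LinearMap.ker α)ᗮ = k := by
    have hrange := finrank_span_eq_card hγ.linearIndependent
    rw [hγα, Fintype.card_fin] at hrange
    have := α.finrank_range_add_finrank_ker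
    have := (LinearMap.ker α).finrank_add_finrank_orthogonal
    omega
  let e := (stdOrthonormalBasis ℝ (LinearMap.ker α)ᗮ).reindex (finCongr hk)
  have hκe : Orthonormal ℝ (Fin.append κ fun i => (e i : V)) :=
    hκ.append (e.orthonormal.comp_linearIsometry (LinearMap.ker α)ᗮ.subtypeₗᵢ)
      fun i j => (LinearMap.ker α).inner_right_of_mem_orthogonal (hκα i) (e j).2
  rw [volBar_eq_abs_det α e hγ hγα, wedgeNorm_append_eq_abs_det κ _ u hκe h, ← abs_mul,
    ← Matrix.det_mul, inner_apply_mul_inner_lift_eq_one α e hγ hu, Matrix.det_one, abs_one]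

theorem det_iso_scales_norm_by_torsion
    {Ce Co : Type*}
    [NormedAddCommGroup Ce] [InnerProductSpace ℝ Ce] [FiniteDimensional ℝ Ce]
    [NormedAddCommGroup Co] [InnerProductSpace ℝ Co] [FiniteDimensional ℝ Co]
    (d0 : Ce →ₗ[ℝ] Co) (d1 : Co →ₗ[ℝ] Ce)
    (h10 : d1.comp d0 = 0) (h01 : d0.comp d1 = 0) :
    ∀ (βe : Fin (finrank ℝ (LinearMap.range d1)) → Ce)
      (ηe : Fin (finrank ℝ (LinearMap.ker d0 ⊓ (LinearMap.range d1)ᗮ : Submodule ℝ Ce)) → Ce)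
      (βo : Fin (finrank ℝ (LinearMap.range d0)) → Co)
      (ηo : Fin (finrank ℝ (LinearMap.ker d1 ⊓ (LinearMap.range d0)ᗮ : Submodule ℝ Co)) → Co)
      (ue : Fin (finrank ℝ (LinearMap.range d0)) → Ce)
      (uo : Fin (finrank ℝ (LinearMap.range d1)) → Co),
      -- `βe` is an orthonormal basis of the boundaries `B^even = im d1`
      Orthonormal ℝ βe → Submodule.span ℝ (Set.range βe) = LinearMap.range d1 →
      -- `ηe` is an orthonormal basis of the harmonic space `H^even = ker d0 ∩ (im d1)^⊥`
      Orthonormal ℝ ηe →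
      Submodule.span ℝ (Set.range ηe) = LinearMap.ker d0 ⊓ (LinearMap.range d1)ᗮ →
      Orthonormal ℝ βo → Submodule.span ℝ (Set.range βo) = LinearMap.range d0 →
      Orthonormal ℝ ηo →
      Submodule.span ℝ (Set.range ηo) = LinearMap.ker d1 ⊓ (LinearMap.range d0)ᗮ →
      -- `ue`, `uo` are lifts of `βo`, `βe` through `d`
      (∀ j, d0 (ue j) = βo j) → (∀ j, d1 (uo j) = βe j) →
      ∀ (he : finrank ℝ (LinearMap.range d1) +
              finrank ℝ (LinearMap.ker d0 ⊓ (LinearMap.range d1)ᗮ : Submodule ℝ Ce) +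
              finrank ℝ (LinearMap.range d0) = finrank ℝ Ce)
        (ho : finrank ℝ (LinearMap.range d0) +
              finrank ℝ (LinearMap.ker d1 ⊓ (LinearMap.range d0)ᗮ : Submodule ℝ Co) +
              finrank ℝ (LinearMap.range d1) = finrank ℝ Co),
      wedgeNorm (fun j => Fin.append (Fin.append βo ηo) uo (Fin.cast ho.symm j)) =
        (volBar d0 / volBar d1) *
          wedgeNorm (fun j => Fin.append (Fin.append βe ηe) ue (Fin.cast he.symm j)) := by
  intro βe ηe βo ηo ue uo hβe hβe_span hηe hηe_span hβo hβo_span hηo hηo_span hue huo he ho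
  obtain ⟨hκe, hκe_ker⟩ := orthonormal_append_and_mem_of_span_eq
    (LinearMap.range_le_ker_iff.mpr h01) hβe hβe_span hηe hηe_span
  obtain ⟨hκo, hκo_ker⟩ := orthonormal_append_and_mem_of_span_eq
    (LinearMap.range_le_ker_iff.mpr h10) hβo hβo_span hηo hηo_span
  have heven := volBar_mul_wedgeNorm_append d0 hκe hκe_ker hβo hβo_span hue he
  have hodd := volBar_mul_wedgeNorm_append d1 hκo hκo_ker hβe hβe_span huo ho
  rw [eq_one_div_of_mul_eq_one_right heven, eq_one_div_of_mul_eq_one_right hodd]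
  field_simp [left_ne_zero_of_mul_eq_one heven]
end

section
/- Let (C*, d) be a Z-graded cochain complex of finite-dimensional real inner product spaces, nonzero in finitely many degrees, regarded as a Z₂-graded complex via parity. Then log T_C = (1/2) Σ_q (−1)^{q+1} q log det'(Δ^q), where T_C = √(det'(d^♯d: C^even → C^even)) / √(det'(d^♯d: C^odd → C^odd)) and Δ^q = d^♯d + dd^♯ on C^q, and det' denotes the product of nonzero eigenvalues. -/
/-!
STATEMENT 13: For a ℤ-graded (here ℕ-graded, supported in degrees `≤ N`) cochain complex of
finite-dimensional real inner product spaces, regarded as a Z₂-graded complex via parity,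
`log T_C = (1/2) Σ_q (−1)^{q+1} q log det'(Δ^q)`,
where `T_C = √(det'(d^♯d : C^even → C^even)) / √(det'(d^♯d : C^odd → C^odd))` and
`Δ^q = d^♯d + dd^♯` on `C^q`.  Since `d^♯d` on `C^even = ⊕_{q even} C^q` is block diagonal
with blocks `d_q^♯ d_q`, one has `log T_C = (1/2) Σ_q (−1)^q log det'(d_q^♯ d_q)`, which is
the form used below.
-/

open Module
open scoped Classical

variable {V : Type*} [NormedAddCommGroup V] [InnerProductSpace ℝ V] [FiniteDimensional ℝ V]

/-!
For a self-adjoint `S`, `det' S` is the determinant of `S` on `range S = (ker S)ᗮ`.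
Because `d ∘ d = 0`, the two halves `d^♯d` and `dd^♯` of a Laplacian annihilate each other and
have orthogonal ranges, so `det' Δ^q = det'(d_q^♯ d_q) · det'(d_{q-1} d_{q-1}^♯)`; and `d`
maps `range d^♯` isomorphically onto `range d`, intertwining `d^♯d` with `dd^♯`, so
`det'(dd^♯) = det'(d^♯d)`. Hence `log det' Δ^q = a_q + a_{q-1}` with
`a_q = log det'(d_q^♯ d_q)`, and Abel summation turns `Σ (-1)^(q+1) q (a_q + a_{q-1})` into
`Σ (-1)^q a_q`; the boundary term vanishes because `d_N = 0`.
-/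

namespace LinearMap

theorem det_eq_det_of_comp_eq_comp {R M N : Type*} [CommRing R] [AddCommGroup M] [Module R M]
    [AddCommGroup N] [Module R N] {f : M →ₗ[R] M} {g : N →ₗ[R] N} (e : M ≃ₗ[R] N)
    (h : g ∘ₗ e = e ∘ₗ f) : LinearMap.det g = LinearMap.det f := by
  rw [← det_conj f e, ← comp_assoc, ← h, comp_assoc]
  congr 1
  ext x
  simp

theorem det_restrict_sup {K M : Type*} [Field K] [AddCommGroup M] [Module K M]
    [FiniteDimensional K M] {f : M →ₗ[K] M} {p q : Submodule K M}
    (hpq : Disjoint p q) (hp : ∀ x ∈ p, f x ∈ p) (hq : ∀ x ∈ q, f x ∈ q)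
    (hpq' : ∀ x ∈ p ⊔ q, f x ∈ p ⊔ q) :
    LinearMap.det (f.restrict hpq') =
      LinearMap.det (f.restrict hp) * LinearMap.det (f.restrict hq) := by
  have hinj : Function.Injective (p.subtype.coprod q.subtype) := by
    rw [← ker_eq_bot, ker_coprod_of_disjoint_range _ _ (by simpa using hpq)]
    simp
  let e : (p × q) ≃ₗ[K] ↥(p ⊔ q) := (LinearEquiv.ofInjective _ hinj).trans
    (LinearEquiv.ofEq _ _ (Submodule.sup_eq_range p q).symm)
  rw [← det_prodMap]
  refine det_eq_det_of_comp_eq_comp e ?_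
  ext ⟨x, y⟩ <;> simp [e]

end LinearMap

open LinearMap

section DetPrime

variable {E F G : Type*} [NormedAddCommGroup E] [InnerProductSpace ℝ E]
  [NormedAddCommGroup F] [InnerProductSpace ℝ F] [FiniteDimensional ℝ F]
  [NormedAddCommGroup G] [InnerProductSpace ℝ G] [FiniteDimensional ℝ G]

theorem detPrime_eq_det_restrict_s13 {S : E →ₗ[ℝ] E} {W : Submodule ℝ E} (hW : (ker S)ᗮ = W)
    (hSW : ∀ x ∈ W, S x ∈ W) : detPrime S = LinearMap.det (S.restrict hSW) := by
  subst hW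
  exact dif_pos hSW

theorem detPrime_zero : detPrime (0 : E →ₗ[ℝ] E) = 1 := by
  have hW : (ker (0 : E →ₗ[ℝ] E))ᗮ = ⊥ := by simp
  rw [detPrime_eq_det_restrict_s13 hW fun x hx => by simp, det_eq_one_of_subsingleton]

variable [FiniteDimensional ℝ E]

namespace LinearMap.IsSymmetric

variable {S T : E →ₗ[ℝ] E}

theorem orthogonal_ker (hS : S.IsSymmetric) : (ker S)ᗮ = range S := by
  rw [← hS.orthogonal_range, Submodule.orthogonal_orthogonal]

theorem detPrime_eq_det_restrict_range (hS : S.IsSymmetric) :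
    detPrime S = LinearMap.det (S.restrict fun x _ => mem_range_self S x) :=
  detPrime_eq_det_restrict_s13 hS.orthogonal_ker _

theorem detPrime_ne_zero (hS : S.IsSymmetric) : detPrime S ≠ 0 := by
  rw [hS.detPrime_eq_det_restrict_range, Ne, det_eq_zero_iff_ker_ne_bot, not_not, ker_eq_bot']
  rintro ⟨x, hx⟩ hSx
  have : x ∈ ker S ⊓ (ker S)ᗮ := ⟨congrArg Subtype.val hSx, hS.orthogonal_ker ▸ hx⟩
  rw [Submodule.inf_orthogonal_eq_bot] at this
  exact Subtype.ext this

theorem detPrime_add (hS : S.IsSymmetric) (hT : T.IsSymmetric) (hST : S ∘ₗ T = 0) :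
    detPrime (S + T) = detPrime S * detPrime T := by
  have hTS : T ∘ₗ S = 0 := by
    rw [← hS.adjoint_eq, ← hT.adjoint_eq, ← adjoint_comp, hST, map_zero]
  have hT_rangeS : ∀ x ∈ range S, T x = 0 := range_le_ker_iff.2 hTS
  have hS_rangeT : ∀ x ∈ range T, S x = 0 := range_le_ker_iff.2 hST
  have hdisj : Disjoint (range S) (range T) :=
    (Submodule.orthogonal_disjoint _).mono_right (hS.orthogonal_range ▸ range_le_ker_iff.2 hST)
  have hker : ker (S + T) = ker S ⊓ ker T := by
    refine le_antisymm (fun x hx => ?_) fun x hx => by simp_all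
    have hSx : S x ∈ range S ⊓ range T := by
      refine ⟨mem_range_self S x, ?_⟩
      rw [← neg_neg (S x), neg_eq_of_add_eq_zero_right hx]
      exact neg_mem (mem_range_self T x)
    rw [hdisj.eq_bot, Submodule.mem_bot] at hSx
    exact ⟨hSx, by simpa [hSx] using hx⟩
  have hW : (ker (S + T))ᗮ = range S ⊔ range T := by
    rw [hker, ← hS.orthogonal_ker, ← hT.orthogonal_ker, ← Submodule.orthogonal_orthogonal
      ((ker S)ᗮ ⊔ (ker T)ᗮ), ← Submodule.inf_orthogonal, Submodule.orthogonal_orthogonal,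
      Submodule.orthogonal_orthogonal]
  have hSS : ∀ x ∈ range S, S x ∈ range S := fun x _ => mem_range_self S x
  have hTT : ∀ x ∈ range T, T x ∈ range T := fun x _ => mem_range_self T x
  have hSTS : ∀ x ∈ range S, (S + T) x ∈ range S := fun x hx => by
    simp [hT_rangeS x hx]
  have hSTT : ∀ x ∈ range T, (S + T) x ∈ range T := fun x hx => by
    simp [hS_rangeT x hx]
  have hrestrictS : (S + T).restrict hSTS = S.restrict hSS := by
    ext ⟨x, hx⟩
    simp [hT_rangeS x hx]
  have hrestrictT : (S + T).restrict hSTT = T.restrict hTT := by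
    ext ⟨x, hx⟩
    simp [hS_rangeT x hx]
  rw [detPrime_eq_det_restrict_s13 hW fun x _ => by
      rw [← hW, (hS.add hT).orthogonal_ker]; exact mem_range_self _ x,
    det_restrict_sup hdisj hSTS hSTT, hrestrictS, hrestrictT, hS.detPrime_eq_det_restrict_range,
    hT.detPrime_eq_det_restrict_range]

end LinearMap.IsSymmetric

theorem detPrime_self_comp_adjoint (B : E →ₗ[ℝ] F) :
    detPrime (B ∘ₗ B.adjoint) = detPrime (B.adjoint ∘ₗ B) := by
  have hmaps : ∀ x ∈ range B.adjoint, B x ∈ range B := fun x _ => mem_range_self B x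
  have hinj : Function.Injective (B.restrict hmaps) := by
    rw [← ker_eq_bot, ker_eq_bot']
    rintro ⟨x, hx⟩ hBx
    have : x ∈ ker B ⊓ (ker B)ᗮ := ⟨congrArg Subtype.val hBx, B.orthogonal_ker ▸ hx⟩
    rw [Submodule.inf_orthogonal_eq_bot] at this
    exact Subtype.ext this
  have hsurj : Function.Surjective (B.restrict hmaps) := by
    rintro ⟨y, hy⟩
    rw [← range_self_comp_adjoint] at hy
    obtain ⟨z, rfl⟩ := hy
    exact ⟨⟨B.adjoint z, mem_range_self _ z⟩, rfl⟩
  rw [detPrime_eq_det_restrict_s13 (W := range B)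
      (by rw [ker_self_comp_adjoint, orthogonal_ker, adjoint_adjoint]) fun x _ => ⟨_, rfl⟩,
    detPrime_eq_det_restrict_s13 (W := range B.adjoint)
      (by rw [ker_adjoint_comp_self, orthogonal_ker]) fun x _ => ⟨_, rfl⟩]
  exact det_eq_det_of_comp_eq_comp (.ofBijective _ ⟨hinj, hsurj⟩) rfl

theorem detPrime_adjoint_comp_self_add_self_comp_adjoint (A : E →ₗ[ℝ] F) (B : G →ₗ[ℝ] E)
    (hAB : A ∘ₗ B = 0) :
    detPrime (A.adjoint ∘ₗ A + B ∘ₗ B.adjoint) =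
      detPrime (A.adjoint ∘ₗ A) * detPrime (B.adjoint ∘ₗ B) := by
  have hBB : (B ∘ₗ B.adjoint).IsSymmetric := by
    simpa using isSymmetric_adjoint_comp_self B.adjoint
  rw [(isSymmetric_adjoint_comp_self A).detPrime_add hBB
      (by rw [comp_assoc, ← comp_assoc B.adjoint B A, hAB, zero_comp, comp_zero]),
    detPrime_self_comp_adjoint]

end DetPrime

theorem sum_range_neg_one_pow_succ_mul_mul_eq {R : Type*} [CommRing R] {a b : ℕ → R}
    (h : ∀ q, b (q + 1) = a (q + 1) + a q) (n : ℕ) :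
    ∑ q ∈ Finset.range (n + 1), (-1) ^ (q + 1) * (q : R) * b q =
      ∑ q ∈ Finset.range (n + 1), (-1) ^ q * a q - (-1) ^ n * (n + 1) * a n := by
  induction n with
  | zero => simp
  | succ n ih =>
    rw [Finset.sum_range_succ, ih, h, Finset.sum_range_succ (fun q => (-1) ^ q * a q) (n + 1)]
    push_cast
    ring

theorem log_torsion_eq_weighted_sum_log_detPrime_laplacians_general
    (C : ℕ → Type*) [∀ q, NormedAddCommGroup (C q)] [∀ q, InnerProductSpace ℝ (C q)]
    [∀ q, FiniteDimensional ℝ (C q)]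
    (d : ∀ q : ℕ, C q →ₗ[ℝ] C (q + 1))
    (hdd : ∀ q : ℕ, (d (q + 1)).comp (d q) = 0)
    (N : ℕ) (hsupp : ∀ q > N, Subsingleton (C q))
    -- the Laplacians Δ^q = d^♯ d + d d^♯
    (Δ : ∀ q : ℕ, C q →ₗ[ℝ] C q)
    (hΔ : ∀ q : ℕ, Δ (q + 1) =
      (LinearMap.adjoint (d (q + 1))).comp (d (q + 1)) +
      (d q).comp (LinearMap.adjoint (d q)))
    -- `log T_C`, computed blockwise over the even/odd decomposition
    (logT : ℝ)
    (hlogT : logT = (1 / 2 : ℝ) * ∑ q ∈ Finset.range (N + 1),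
      (-1 : ℝ) ^ q * Real.log (detPrime ((LinearMap.adjoint (d q)).comp (d q)))) :
    logT = (1 / 2 : ℝ) * ∑ q ∈ Finset.range (N + 1),
      (-1 : ℝ) ^ (q + 1) * (q : ℝ) * Real.log (detPrime (Δ q)) := by
  let a q := Real.log (detPrime ((d q).adjoint ∘ₗ d q))
  have hΔ_log : ∀ q, Real.log (detPrime (Δ (q + 1))) = a (q + 1) + a q := fun q => by
    rw [hΔ q, detPrime_adjoint_comp_self_add_self_comp_adjoint _ _ (hdd q),
      Real.log_mul (isSymmetric_adjoint_comp_self _).detPrime_ne_zero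
        (isSymmetric_adjoint_comp_self _).detPrime_ne_zero]
  have hdN : d N = 0 :=
    have : Subsingleton (C (N + 1)) := hsupp (N + 1) N.lt_succ_self
    Subsingleton.elim _ _
  have haN : a N = 0 := by simp only [a, hdN, comp_zero, detPrime_zero, Real.log_one]
  rw [hlogT, sum_range_neg_one_pow_succ_mul_mul_eq hΔ_log, haN, mul_zero, sub_zero]

theorem log_torsion_eq_weighted_sum_log_detPrime_laplacians
    (C : ℕ → Type*) [∀ q, NormedAddCommGroup (C q)] [∀ q, InnerProductSpace ℝ (C q)]
    [∀ q, FiniteDimensional ℝ (C q)]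
    (d : ∀ q : ℕ, C q →ₗ[ℝ] C (q + 1))
    (hdd : ∀ q : ℕ, (d (q + 1)).comp (d q) = 0)
    (N : ℕ) (hsupp : ∀ q > N, Subsingleton (C q))
    -- the Laplacians Δ^q = d^♯ d + d d^♯
    (Δ : ∀ q : ℕ, C q →ₗ[ℝ] C q)
    (hΔ0 : Δ 0 = (LinearMap.adjoint (d 0)).comp (d 0))
    (hΔ : ∀ q : ℕ, Δ (q + 1) =
      (LinearMap.adjoint (d (q + 1))).comp (d (q + 1)) +
      (d q).comp (LinearMap.adjoint (d q)))
    -- `log T_C`, computed blockwise over the even/odd decomposition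
    (logT : ℝ)
    (hlogT : logT = (1 / 2 : ℝ) * ∑ q ∈ Finset.range (N + 1),
      (-1 : ℝ) ^ q * Real.log (detPrime ((LinearMap.adjoint (d q)).comp (d q)))) :
    logT = (1 / 2 : ℝ) * ∑ q ∈ Finset.range (N + 1),
      (-1 : ℝ) ^ (q + 1) * (q : ℝ) * Real.log (detPrime (Δ q)) :=
  log_torsion_eq_weighted_sum_log_detPrime_laplacians_general C d hdd N hsupp Δ hΔ logT hlogT
end

section
/- Let C be a finite-dimensional Z₂-graded complex over ℝ with inner product and let Z = ker d, B = im d, HC = Z/B with induced inner products (HC via the isometric identification with Z ∩ B^⊥). Then: (a) the isomorphism det Z ≅ det B ⊗ det HC induced by 0 → B → Z → HC → 0 maps ||·||_{det Z} to ||·||_{det B} ⊗ ||·||_{det HC}; (b) the isomorphism det C ≅ det Z ⊗ det B^op induced by 0 → Z → C → B^op → 0 maps ||·||_{det C} to T_C · ||·||_{det Z} ⊗ ||·||_{det B^op}. -/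
/-!
Norms of top wedges are square roots of Gram determinants, and when `a` is orthonormal the Gram
determinant of `a ++ b` equals that of the components of `b` orthogonal to `a` (a Schur
complement). In (a) these components are `b` itself, an orthonormal family. In (b) the
components `w` of the lifts `u` orthogonal to `Z = ker d` lie in `Zᗮ` and `d ∘ w = d ∘ u` is
orthonormal; the matrix `M` of `d^♯ d` on `Zᗮ` in the basis `w` then satisfies
`Gram(w) * M = Gram(d ∘ w) = 1`, so `Vol(d̄)² = det M = Gram(w)⁻¹`.
-/

open Module
open scoped Classical

variable {V : Type*} [NormedAddCommGroup V] [InnerProductSpace ℝ V] [FiniteDimensional ℝ V]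
variable {W : Type*} [NormedAddCommGroup W] [InnerProductSpace ℝ W] [FiniteDimensional ℝ W]

open Matrix LinearMap Submodule Set
open scoped InnerProductSpace

section Gram

variable {E : Type*} [NormedAddCommGroup E] [InnerProductSpace ℝ E]

theorem Orthonormal.inner_sub_sum_inner_smul {ι : Type*} [Fintype ι] {a : ι → E}
    (ha : Orthonormal ℝ a) (x : E) (i : ι) :
    ⟪a i, x - ∑ k, ⟪a k, x⟫_ℝ • a k⟫_ℝ = 0 := by
  rw [inner_sub_right, ha.inner_right_fintype, sub_self]

theorem Orthonormal.gram_sub_sum_inner_smul {ι κ : Type*} [Fintype ι] {a : ι → E}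
    (ha : Orthonormal ℝ a) (b : κ → E) :
    gram ℝ (fun j => b j - ∑ k, ⟪a k, b j⟫_ℝ • a k) =
      gram ℝ b - (of fun k j => ⟪a k, b j⟫_ℝ)ᵀ * of fun k j => ⟪a k, b j⟫_ℝ := by
  ext i j
  have hres : ⟪b i - ∑ k, ⟪a k, b i⟫_ℝ • a k, ∑ k, ⟪a k, b j⟫_ℝ • a k⟫_ℝ = 0 := by
    simp only [inner_sum, real_inner_smul_right, real_inner_comm (a _),
      ha.inner_sub_sum_inner_smul, mul_zero, Finset.sum_const_zero]
  rw [gram_apply, inner_sub_right, hres, sub_zero, inner_sub_left, sum_inner]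
  simp only [real_inner_smul_left, Matrix.sub_apply, Matrix.mul_apply, transpose_apply, of_apply,
    gram_apply]

theorem Orthonormal.det_gram_append {n m : ℕ} {a : Fin n → E} (ha : Orthonormal ℝ a)
    (b : Fin m → E) :
    (gram ℝ (Fin.append a b)).det = (gram ℝ (fun j => b j - ∑ k, ⟪a k, b j⟫_ℝ • a k)).det := by
  have hblocks : (gram ℝ (Fin.append a b)).submatrix finSumFinEquiv finSumFinEquiv =
      fromBlocks 1 (of fun k j => ⟪a k, b j⟫_ℝ) (of fun k j => ⟪a k, b j⟫_ℝ)ᵀ (gram ℝ b) := by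
    rw [← gram_eq_one_iff_orthonormal.mpr ha]
    ext (i | i) (j | j) <;> simp [real_inner_comm]
  rw [← det_submatrix_equiv_self finSumFinEquiv, hblocks, det_fromBlocks_one₁₁,
    ha.gram_sub_sum_inner_smul]

theorem Orthonormal.sub_sum_inner_smul_mem_orthogonal {ι : Type*} [Fintype ι] {a : ι → E}
    (ha : Orthonormal ℝ a) (x : E) :
    x - ∑ k, ⟪a k, x⟫_ℝ • a k ∈ (span ℝ (range a))ᗮ := by
  refine (isOrtho_span.mpr ?_ : span ℝ {_} ⟂ span ℝ (range a)) (mem_span_singleton_self _)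
  rintro _ rfl _ ⟨k, rfl⟩
  rw [real_inner_comm, ha.inner_sub_sum_inner_smul]

theorem gram_mul_toMatrix {ι : Type*} [Fintype ι] [DecidableEq ι] (b : Basis ι ℝ E)
    (S : E →ₗ[ℝ] E) :
    gram ℝ b * toMatrix b b S = of fun i j => ⟪b i, S (b j)⟫_ℝ := by
  ext i j
  conv_rhs => rw [of_apply, ← b.sum_repr (S (b j))]
  simp only [mul_apply, gram_apply, toMatrix_apply, inner_sum, real_inner_smul_right, mul_comm]

end Gram

theorem wedgeNorm_eq_sqrt_det_gram (v : Fin (finrank ℝ V) → V) :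
    wedgeNorm v = √(gram ℝ v).det := by
  rw [gram_eq_conjTranspose_mul (stdOrthonormalBasis ℝ V), det_mul, det_conjTranspose,
    star_trivial, ← sq, Real.sqrt_sq_eq_abs, wedgeNorm, Basis.det_apply]
  rfl

theorem Orthonormal.wedgeNorm_cast_append {n m : ℕ} {a : Fin n → V} (ha : Orthonormal ℝ a)
    (b : Fin m → V) (h : n + m = finrank ℝ V) :
    wedgeNorm (fun j => Fin.append a b (Fin.cast h.symm j)) =
      √(gram ℝ (fun j => b j - ∑ k, ⟪a k, b j⟫_ℝ • a k)).det := by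
  rw [wedgeNorm_eq_sqrt_det_gram, ← ha.det_gram_append,
    ← det_submatrix_equiv_self (finCongr h.symm)]
  rfl

theorem wedgeNorm_append_eq_one_of_orthogonal {Z B : Submodule ℝ V} {n m : ℕ}
    {β : Fin n → Z} {η : Fin m → Z} (hβ : Orthonormal ℝ β)
    (hβB : span ℝ (range fun j => (β j : V)) ≤ B) (hη : Orthonormal ℝ η)
    (hηB : span ℝ (range fun j => (η j : V)) ≤ Bᗮ) (h : n + m = finrank ℝ Z) :
    wedgeNorm (fun j => Fin.append β η (Fin.cast h.symm j)) = 1 := by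
  have hβη : ∀ i j, ⟪β i, η j⟫_ℝ = 0 := fun i j =>
    inner_right_of_mem_orthogonal (K := B) (hβB (subset_span ⟨i, rfl⟩)) (hηB (subset_span ⟨j, rfl⟩))
  have hres : (fun j => η j - ∑ k, ⟪β k, η j⟫_ℝ • β k) = η := by simp [hβη]
  rw [hβ.wedgeNorm_cast_append η h, hres, gram_eq_one_iff_orthonormal.mpr hη, det_one,
    Real.sqrt_one]

theorem adjoint_comp_self_apply_mem_orthogonal_ker (d : V →ₗ[ℝ] W) (x : V) :
    (d.adjoint ∘ₗ d) x ∈ (ker (d.adjoint ∘ₗ d))ᗮ := by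
  rw [orthogonal_ker, adjoint_comp, adjoint_adjoint]
  exact mem_range_self _ x

theorem volBar_eq_sqrt_det_toMatrix (d : V →ₗ[ℝ] W) {ι : Type*} [Fintype ι] [DecidableEq ι]
    (b : Basis ι ℝ (ker (d.adjoint ∘ₗ d))ᗮ) :
    volBar d = √(toMatrix b b ((d.adjoint ∘ₗ d).restrict
      fun x _ => adjoint_comp_self_apply_mem_orthogonal_ker d x)).det := by
  rw [volBar, detPrime, dif_pos fun x _ => adjoint_comp_self_apply_mem_orthogonal_ker d x,
    det_toMatrix]

theorem volBar_mul_sqrt_det_gram (d : V →ₗ[ℝ] W) {m : ℕ} {w : Fin m → V}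
    (hw : ∀ j, w j ∈ (ker d)ᗮ) (hdw : Orthonormal ℝ (d ∘ w))
    (hm : m = finrank ℝ (ker d)ᗮ) :
    volBar d * √(gram ℝ w).det = 1 := by
  rw [← ker_adjoint_comp_self d] at hw hm
  set K := (ker (d.adjoint ∘ₗ d))ᗮ
  let w' : Fin m → K := fun j => ⟨w j, hw j⟩
  have hli : LinearIndependent ℝ w' :=
    LinearIndependent.of_comp (d ∘ₗ K.subtype) hdw.linearIndependent
  let b := basisOfLinearIndependentOfCardEqFinrank' w' hli (by rw [Fintype.card_fin, hm])
  have hgram : gram ℝ b = gram ℝ w := by ext; simp [b, w']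
  set M := toMatrix b b ((d.adjoint ∘ₗ d).restrict
    fun x _ => adjoint_comp_self_apply_mem_orthogonal_ker d x)
  have hGM : gram ℝ w * M = 1 := by
    rw [← hgram, gram_mul_toMatrix, ← gram_eq_one_iff_orthonormal.mpr hdw]
    ext i j
    simp [b, w', adjoint_inner_right]
  have hdet : (gram ℝ w).det * M.det = 1 := by rw [← det_mul, hGM, det_one]
  have hG : 0 < (gram ℝ w).det :=
    (posDef_gram_of_linearIndependent (hdw.linearIndependent.of_comp d)).det_pos
  rw [volBar_eq_sqrt_det_toMatrix d b, ← Real.sqrt_mul (by nlinarith), mul_comm, hdet,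
    Real.sqrt_one]

theorem volBar_mul_wedgeNorm_cast_append (d : V →ₗ[ℝ] W) {n m : ℕ}
    {ζ : Fin n → V} {β : Fin m → W} {u : Fin m → V} (hζ : Orthonormal ℝ ζ)
    (hζd : span ℝ (range ζ) = ker d) (hβ : Orthonormal ℝ β) (hu : ∀ j, d (u j) = β j)
    (h : n + m = finrank ℝ V) :
    volBar d * wedgeNorm (fun j => Fin.append ζ u (Fin.cast h.symm j)) = 1 := by
  have hζ_ker : ∀ k, ζ k ∈ ker d := fun k => hζd ▸ subset_span ⟨k, rfl⟩
  rw [hζ.wedgeNorm_cast_append u h]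
  refine volBar_mul_sqrt_det_gram d (fun j => ?_) ?_ ?_
  · exact hζd ▸ hζ.sub_sum_inner_smul_mem_orthogonal (u j)
  · convert hβ using 1
    ext j
    simp [hu, fun k => mem_ker.mp (hζ_ker k)]
  · have hn : finrank ℝ (ker d) = n := by
      rw [← hζd, finrank_span_eq_card hζ.linearIndependent, Fintype.card_fin]
    have := (ker d).finrank_add_finrank_orthogonal
    omega

theorem det_Z_iso_isometric_and_det_C_iso_scales_general
    {Ce Co : Type*}
    [NormedAddCommGroup Ce] [InnerProductSpace ℝ Ce] [FiniteDimensional ℝ Ce]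
    [NormedAddCommGroup Co] [InnerProductSpace ℝ Co] [FiniteDimensional ℝ Co]
    (d0 : Ce →ₗ[ℝ] Co) (d1 : Co →ₗ[ℝ] Ce) :
    -- (a) `0 → B → Z → HC → 0` splits orthogonally and the induced isomorphism
    --     `det Z ≅ det B ⊗ det HC` is norm preserving (stated for the even parity; the odd
    --     parity is the same statement for the complex with the two parities exchanged)
    ((∀ (β : Fin (finrank ℝ (LinearMap.range d1)) → LinearMap.ker d0)
        (η : Fin (finrank ℝ (LinearMap.ker d0 ⊓ (LinearMap.range d1)ᗮ : Submodule ℝ Ce)) →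
          LinearMap.ker d0),
        Orthonormal ℝ β →
        Submodule.span ℝ (Set.range fun j => (β j : Ce)) = LinearMap.range d1 →
        Orthonormal ℝ η →
        Submodule.span ℝ (Set.range fun j => (η j : Ce)) =
          LinearMap.ker d0 ⊓ (LinearMap.range d1)ᗮ →
        ∀ h : finrank ℝ (LinearMap.range d1) +
            finrank ℝ (LinearMap.ker d0 ⊓ (LinearMap.range d1)ᗮ : Submodule ℝ Ce) =
            finrank ℝ (LinearMap.ker d0),
          wedgeNorm (fun j => Fin.append β η (Fin.cast h.symm j)) = 1) ∧
      (∀ (β : Fin (finrank ℝ (LinearMap.range d0)) → LinearMap.ker d1)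
        (η : Fin (finrank ℝ (LinearMap.ker d1 ⊓ (LinearMap.range d0)ᗮ : Submodule ℝ Co)) →
          LinearMap.ker d1),
        Orthonormal ℝ β →
        Submodule.span ℝ (Set.range fun j => (β j : Co)) = LinearMap.range d0 →
        Orthonormal ℝ η →
        Submodule.span ℝ (Set.range fun j => (η j : Co)) =
          LinearMap.ker d1 ⊓ (LinearMap.range d0)ᗮ →
        ∀ h : finrank ℝ (LinearMap.range d0) +
            finrank ℝ (LinearMap.ker d1 ⊓ (LinearMap.range d0)ᗮ : Submodule ℝ Co) =
            finrank ℝ (LinearMap.ker d1),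
          wedgeNorm (fun j => Fin.append β η (Fin.cast h.symm j)) = 1)) ∧
    -- (b) for the sequence `0 → Z → C →d→ B^op → 0`: in the even parity, with `ζ` an
    --     orthonormal basis of `Z^even = ker d0` and `u` lifts of an orthonormal basis of
    --     `(B^op)^even = im d0`, the generator `ζ ∧ u` of `det C^even` satisfies
    --     `Vol(d̄0) ‖ζ ∧ u‖ = 1`; similarly in the odd parity with `Vol(d̄1)`
    ((∀ (ζ : Fin (finrank ℝ (LinearMap.ker d0)) → Ce)
        (βo : Fin (finrank ℝ (LinearMap.range d0)) → Co)
        (u : Fin (finrank ℝ (LinearMap.range d0)) → Ce),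
        Orthonormal ℝ ζ → Submodule.span ℝ (Set.range ζ) = LinearMap.ker d0 →
        Orthonormal ℝ βo → Submodule.span ℝ (Set.range βo) = LinearMap.range d0 →
        (∀ j, d0 (u j) = βo j) →
        ∀ h : finrank ℝ (LinearMap.ker d0) + finrank ℝ (LinearMap.range d0) =
            finrank ℝ Ce,
          volBar d0 * wedgeNorm (fun j => Fin.append ζ u (Fin.cast h.symm j)) = 1) ∧
      (∀ (ζ : Fin (finrank ℝ (LinearMap.ker d1)) → Co)
        (βe : Fin (finrank ℝ (LinearMap.range d1)) → Ce)
        (u : Fin (finrank ℝ (LinearMap.range d1)) → Co),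
        Orthonormal ℝ ζ → Submodule.span ℝ (Set.range ζ) = LinearMap.ker d1 →
        Orthonormal ℝ βe → Submodule.span ℝ (Set.range βe) = LinearMap.range d1 →
        (∀ j, d1 (u j) = βe j) →
        ∀ h : finrank ℝ (LinearMap.ker d1) + finrank ℝ (LinearMap.range d1) =
            finrank ℝ Co,
          volBar d1 * wedgeNorm (fun j => Fin.append ζ u (Fin.cast h.symm j)) = 1)) := by
  refine ⟨⟨?_, ?_⟩, ?_, ?_⟩
  · exact fun β η hβ hβs hη hηs h =>
      wedgeNorm_append_eq_one_of_orthogonal hβ hβs.le hη (hηs.trans_le inf_le_right) h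
  · exact fun β η hβ hβs hη hηs h =>
      wedgeNorm_append_eq_one_of_orthogonal hβ hβs.le hη (hηs.trans_le inf_le_right) h
  · exact fun ζ β u hζ hζs hβ _ hu h => volBar_mul_wedgeNorm_cast_append d0 hζ hζs hβ hu h
  · exact fun ζ β u hζ hζs hβ _ hu h => volBar_mul_wedgeNorm_cast_append d1 hζ hζs hβ hu h

theorem det_Z_iso_isometric_and_det_C_iso_scales
    {Ce Co : Type*}
    [NormedAddCommGroup Ce] [InnerProductSpace ℝ Ce] [FiniteDimensional ℝ Ce]
    [NormedAddCommGroup Co] [InnerProductSpace ℝ Co] [FiniteDimensional ℝ Co]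
    (d0 : Ce →ₗ[ℝ] Co) (d1 : Co →ₗ[ℝ] Ce)
    (h10 : d1.comp d0 = 0) (h01 : d0.comp d1 = 0) :
    -- (a) `0 → B → Z → HC → 0` splits orthogonally and the induced isomorphism
    --     `det Z ≅ det B ⊗ det HC` is norm preserving (stated for the even parity; the odd
    --     parity is the same statement for the complex with the two parities exchanged)
    ((∀ (β : Fin (finrank ℝ (LinearMap.range d1)) → LinearMap.ker d0)
        (η : Fin (finrank ℝ (LinearMap.ker d0 ⊓ (LinearMap.range d1)ᗮ : Submodule ℝ Ce)) →
          LinearMap.ker d0),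
        Orthonormal ℝ β →
        Submodule.span ℝ (Set.range fun j => (β j : Ce)) = LinearMap.range d1 →
        Orthonormal ℝ η →
        Submodule.span ℝ (Set.range fun j => (η j : Ce)) =
          LinearMap.ker d0 ⊓ (LinearMap.range d1)ᗮ →
        ∀ h : finrank ℝ (LinearMap.range d1) +
            finrank ℝ (LinearMap.ker d0 ⊓ (LinearMap.range d1)ᗮ : Submodule ℝ Ce) =
            finrank ℝ (LinearMap.ker d0),
          wedgeNorm (fun j => Fin.append β η (Fin.cast h.symm j)) = 1) ∧
      (∀ (β : Fin (finrank ℝ (LinearMap.range d0)) → LinearMap.ker d1)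
        (η : Fin (finrank ℝ (LinearMap.ker d1 ⊓ (LinearMap.range d0)ᗮ : Submodule ℝ Co)) →
          LinearMap.ker d1),
        Orthonormal ℝ β →
        Submodule.span ℝ (Set.range fun j => (β j : Co)) = LinearMap.range d0 →
        Orthonormal ℝ η →
        Submodule.span ℝ (Set.range fun j => (η j : Co)) =
          LinearMap.ker d1 ⊓ (LinearMap.range d0)ᗮ →
        ∀ h : finrank ℝ (LinearMap.range d0) +
            finrank ℝ (LinearMap.ker d1 ⊓ (LinearMap.range d0)ᗮ : Submodule ℝ Co) =
            finrank ℝ (LinearMap.ker d1),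
          wedgeNorm (fun j => Fin.append β η (Fin.cast h.symm j)) = 1)) ∧
    -- (b) for the sequence `0 → Z → C →d→ B^op → 0`: in the even parity, with `ζ` an
    --     orthonormal basis of `Z^even = ker d0` and `u` lifts of an orthonormal basis of
    --     `(B^op)^even = im d0`, the generator `ζ ∧ u` of `det C^even` satisfies
    --     `Vol(d̄0) ‖ζ ∧ u‖ = 1`; similarly in the odd parity with `Vol(d̄1)`
    ((∀ (ζ : Fin (finrank ℝ (LinearMap.ker d0)) → Ce)
        (βo : Fin (finrank ℝ (LinearMap.range d0)) → Co)
        (u : Fin (finrank ℝ (LinearMap.range d0)) → Ce),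
        Orthonormal ℝ ζ → Submodule.span ℝ (Set.range ζ) = LinearMap.ker d0 →
        Orthonormal ℝ βo → Submodule.span ℝ (Set.range βo) = LinearMap.range d0 →
        (∀ j, d0 (u j) = βo j) →
        ∀ h : finrank ℝ (LinearMap.ker d0) + finrank ℝ (LinearMap.range d0) =
            finrank ℝ Ce,
          volBar d0 * wedgeNorm (fun j => Fin.append ζ u (Fin.cast h.symm j)) = 1) ∧
      (∀ (ζ : Fin (finrank ℝ (LinearMap.ker d1)) → Co)
        (βe : Fin (finrank ℝ (LinearMap.range d1)) → Ce)
        (u : Fin (finrank ℝ (LinearMap.range d1)) → Co),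
        Orthonormal ℝ ζ → Submodule.span ℝ (Set.range ζ) = LinearMap.ker d1 →
        Orthonormal ℝ βe → Submodule.span ℝ (Set.range βe) = LinearMap.range d1 →
        (∀ j, d1 (u j) = βe j) →
        ∀ h : finrank ℝ (LinearMap.ker d1) + finrank ℝ (LinearMap.range d1) =
            finrank ℝ Co,
          volBar d1 * wedgeNorm (fun j => Fin.append ζ u (Fin.cast h.symm j)) = 1)) :=
  det_Z_iso_isometric_and_det_C_iso_scales_general d0 d1
end
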